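/- arXiv:2110.10273 — 5 statements merged into one kernel-verified Lean document; each statement's English description precedes it below -/
import Mathlib

section
/- Let λ/μ be a skew shape that is a single k-ribbon (a connected skew shape of size k containing no 2×2 square), and let (a_0,…,a_{s-1}), (b_0,…,b_{s-1}) be the Maya diagrams of λ and μ of equal length s. Then there exists an index i such that a_i = b_{i+k} = E, a_{i+k} = b_i = S, and a_j = b_j for all j ∉ {i, i+k}; moreover, the tail u (north-west-most cell) of the ribbon has adjusted content ac(u) = i. -/
/-!
STATEMENT 2: If a skew shape `λ/μ` is a single `k`-ribbon (a connected skew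
shape of size `k` with no 2×2 square), then the Maya diagrams of `λ` and `μ`
(taken of a common length) agree except at two positions `i, i+k`, where
`a_i = b_{i+k} = E` and `a_{i+k} = b_i = S`; moreover `i` equals the adjusted
content `ac(u) = c(u) + ℓ(λ/μ) − 1` of the tail `u` (north-west-most cell) of
the ribbon.

Conventions: partitions with `p` parts are functions `ℕ → ℕ` weakly decreasing
on the first `p` values; the Maya diagram of such a partition has an `S` step
at position `c` iff `c` lies in the beta set `{λ_j + (p − 1 − j) : j < p}`.
A skew shape `λ/μ` is a single `k`-ribbon occupying (0-indexed) rows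
`r₁,…,r₂` iff: `λ_j = μ_j` outside these rows; every such row is nonempty
(`μ_j < λ_j`, connectedness together with the next condition); consecutive rows
overlap in exactly one column, `μ_j + 1 = λ_{j+1}` for `r₁ ≤ j < r₂`
(connected and no 2×2 square); and the total size is `k`.  The tail of the
ribbon is the cell in (0-indexed) row `r₂`, (1-indexed) column `μ_{r₂} + 1`.
-/

/-- The beta set of a partition with `p` parts: the positions of the `S` steps
of its Maya diagram. -/
def BetaSet (p : ℕ) (lam : ℕ → ℕ) : Set ℕ := {c | ∃ j < p, c = lam j + (p - 1 - j)}

/-- `λ/μ` is a single `k`-ribbon occupying rows `r₁,…,r₂` (0-indexed). -/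
def IsSingleRibbon (p k : ℕ) (lam mu : ℕ → ℕ) (r₁ r₂ : ℕ) : Prop :=
  r₁ ≤ r₂ ∧ r₂ < p ∧
  (∀ j, j < p → (j < r₁ ∨ r₂ < j) → lam j = mu j) ∧
  (∀ j, r₁ ≤ j → j < r₂ → mu j + 1 = lam (j + 1)) ∧
  (∀ j, r₁ ≤ j → j ≤ r₂ → mu j < lam j) ∧
  (∑ j ∈ Finset.Icc r₁ r₂, (lam j - mu j)) = k

theorem single_ribbon_maya (p k : ℕ) (lam mu : ℕ → ℕ)
    (hlam : ∀ j j', j ≤ j' → j' < p → lam j' ≤ lam j)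
    (hmu : ∀ j j', j ≤ j' → j' < p → mu j' ≤ mu j)
    (hsub : ∀ j, j < p → mu j ≤ lam j)
    (r₁ r₂ : ℕ) (hrib : IsSingleRibbon p k lam mu r₁ r₂) :
    ∃ i : ℕ,
      -- `a_i = E`, `b_i = S`, `a_{i+k} = S`, `b_{i+k} = E`:
      i ∉ BetaSet p lam ∧ i ∈ BetaSet p mu ∧
      i + k ∈ BetaSet p lam ∧ i + k ∉ BetaSet p mu ∧
      -- `a_j = b_j` for `j ∉ {i, i+k}`:
      (∀ j, j ≠ i → j ≠ i + k → (j ∈ BetaSet p lam ↔ j ∈ BetaSet p mu)) ∧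
      -- `i = ac(u) = c(u) + ℓ(λ/μ) − 1` for the tail `u` of the ribbon, which
      -- lies in (1-indexed) row `r₂ + 1` and column `μ_{r₂} + 1`, so that its
      -- content is `c(u) = (μ_{r₂} + 1) − (r₂ + 1)`:
      (i : ℤ) = (((mu r₂ : ℤ) + 1) - ((r₂ : ℤ) + 1)) + (p : ℤ) - 1 := by
  obtain ⟨hr12, hr2p, hout, hstep, hne, hsum⟩ := hrib
  have hr1p : r₁ < p := lt_of_le_of_lt hr12 hr2p
  -- strict monotonicity of the staircase functions
  have hF : ∀ j j', j < j' → j' < p → lam j' + (p - 1 - j') < lam j + (p - 1 - j) := by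
    intro j j' h h'
    have := hlam j j' (le_of_lt h) h'
    omega
  have hG : ∀ j j', j < j' → j' < p → mu j' + (p - 1 - j') < mu j + (p - 1 - j) := by
    intro j j' h h'
    have := hmu j j' (le_of_lt h) h'
    omega
  -- shift relation
  have hshift : ∀ j, r₁ ≤ j → j < r₂ →
      lam (j + 1) + (p - 1 - (j + 1)) = mu j + (p - 1 - j) := by
    intro j h1 h2
    have := hstep j h1 h2
    omega
  -- telescoping the size
  have htel : ∀ n, r₁ ≤ n → n ≤ r₂ →
      (∑ j ∈ Finset.Icc r₁ n, (lam j - mu j)) + mu n = lam r₁ + (n - r₁) := by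
    intro n h1 h2
    induction n, h1 using Nat.le_induction with
    | base =>
      rw [Finset.Icc_self, Finset.sum_singleton]
      have := hne r₁ le_rfl hr12
      omega
    | succ n hn ih =>
      have hn2 : n ≤ r₂ := by omega
      have ih' := ih hn2
      rw [Finset.sum_Icc_succ_top (by omega)]
      have h1 := hstep n hn (by omega)
      have h2 := hne (n + 1) (by omega) h2
      omega
  have hk : mu r₂ + (p - 1 - r₂) + k = lam r₁ + (p - 1 - r₁) := by
    have := htel r₂ hr12 le_rfl
    omega
  refine ⟨mu r₂ + (p - 1 - r₂), ?_, ⟨r₂, hr2p, rfl⟩, ?_, ?_, ?_, ?_⟩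
  · -- i ∉ BetaSet lam
    rintro ⟨j, hj, hij⟩
    rcases lt_or_ge j r₁ with h | h
    · have heq := hout j hj (Or.inl h)
      have := hG j r₂ (by omega) hr2p
      omega
    · rcases le_or_gt j r₂ with h' | h'
      · have h1 := hne j h h'
        rcases eq_or_lt_of_le h' with rfl | h2
        · omega
        · have := hG j r₂ h2 hr2p
          omega
      · have heq := hout j hj (Or.inr h')
        have := hG r₂ j h' hj
        omega
  · -- i + k ∈ BetaSet lam
    exact ⟨r₁, hr1p, by omega⟩
  · -- i + k ∉ BetaSet mu
    rintro ⟨j, hj, hij⟩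
    rw [hk] at hij
    rcases lt_or_ge j r₁ with h | h
    · have heq := hout j hj (Or.inl h)
      have := hF j r₁ h hr1p
      omega
    · rcases le_or_gt j r₂ with h' | h'
      · have h1 := hne r₁ le_rfl hr12
        rcases eq_or_lt_of_le h with rfl | h2
        · omega
        · have := hG r₁ j h2 hj
          omega
      · have heq := hout j hj (Or.inr h')
        have := hF r₁ j (by omega) hj
        omega
  · -- agreement away from i and i + k
    intro j hji hjik
    constructor
    · rintro ⟨m, hm, rfl⟩
      rcases lt_or_ge m r₁ with h | h
      · exact ⟨m, hm, by rw [hout m hm (Or.inl h)]⟩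
      · rcases eq_or_lt_of_le h with rfl | h1
        · exfalso; apply hjik; omega
        · rcases le_or_gt m r₂ with h2 | h2
          · refine ⟨m - 1, by omega, ?_⟩
            have := hshift (m - 1) (by omega) (by omega)
            have hm1 : m - 1 + 1 = m := by omega
            rw [hm1] at this
            omega
          · exact ⟨m, hm, by rw [hout m hm (Or.inr h2)]⟩
    · rintro ⟨m, hm, rfl⟩
      rcases lt_or_ge m r₁ with h | h
      · exact ⟨m, hm, by rw [hout m hm (Or.inl h)]⟩
      · rcases lt_or_ge m r₂ with h1 | h1
        · refine ⟨m + 1, by omega, ?_⟩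
          have := hshift m h h1
          omega
        · rcases eq_or_lt_of_le h1 with rfl | h2
          · exfalso; apply hji; omega
          · exact ⟨m, hm, by rw [hout m hm (Or.inr h2)]⟩
  · -- the adjusted content identity
    omega
end

section
/- Let λ/μ be a skew shape that is a single k-ribbon, and let (λ^{(0)}/μ^{(0)}, …, λ^{(k-1)}/μ^{(k-1)}) be its k-quotient. Then the k-quotient consists of a single cell: exactly one of the skew shapes λ^{(r)}/μ^{(r)} is nonempty, and it has exactly one cell v. Moreover, writing the adjusted content of the tail u of the ribbon as ac(u) = qk + r with 0 ≤ r < k, the cell v lies in λ^{(r)}/μ^{(r)} and has adjusted content ac(v) = q. -/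
theorem ribbon_quotient_single_cell (p k : ℕ) (hk : 0 < k) (lam mu : ℕ → ℕ)
    (hlam : ∀ j j', j ≤ j' → j' < p → lam j' ≤ lam j)
    (hmu : ∀ j j', j ≤ j' → j' < p → mu j' ≤ mu j)
    (hsub : ∀ j, j < p → mu j ≤ lam j)
    (r₁ r₂ : ℕ) (hrib : IsSingleRibbon p k lam mu r₁ r₂) :
    -- `ac(u) = q·k + r`, `0 ≤ r < k`, for the tail `u` of the ribbon:
    ∃ q r : ℕ, mu r₂ + (p - 1 - r₂) = q * k + r ∧ r < k ∧
      -- every component `c ≠ r` of the `k`-quotient of `λ/μ` is empty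
      -- (equal quotient beta sets):
      (∀ c, c < k → c ≠ r →
        ∀ l, (l * k + c ∈ BetaSet p lam ↔ l * k + c ∈ BetaSet p mu)) ∧
      -- component `r` is a single cell `v` of adjusted content `q`:
      -- its quotient beta sets agree except that `q` (present for `μ`) is
      -- replaced by `q + 1` (present for `λ`):
      q * k + r ∈ BetaSet p mu ∧ q * k + r ∉ BetaSet p lam ∧
      (q + 1) * k + r ∈ BetaSet p lam ∧ (q + 1) * k + r ∉ BetaSet p mu ∧
      (∀ l, l ≠ q → l ≠ q + 1 →
        (l * k + r ∈ BetaSet p lam ↔ l * k + r ∈ BetaSet p mu)) := by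

  obtain ⟨h12, h2p, hout, hstep, hlt, hsum⟩ := hrib
  have hkey : ∀ j, r₁ ≤ j → j ≤ r₂ →
      (∑ i ∈ Finset.Icc r₁ j, (lam i - mu i)) + mu j = lam r₁ + (j - r₁) := by
    intro j hj1 hj2
    induction j, hj1 using Nat.le_induction with
    | base =>
      rw [Finset.Icc_self, Finset.sum_singleton]
      have := hlt r₁ le_rfl h12
      omega
    | succ j hj ih =>
      have hjr : j < r₂ := by omega
      have ih' := ih (by omega)
      rw [Finset.sum_Icc_succ_top (by omega : r₁ ≤ j + 1)]
      have h1 := hstep j hj hjr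
      have h2 := hlt (j + 1) (by omega) hj2
      omega
  have hmain : lam r₁ + (r₂ - r₁) = mu r₂ + k := by
    have := hkey r₂ h12 le_rfl
    omega
  have binj : ∀ (f : ℕ → ℕ), (∀ j j', j ≤ j' → j' < p → f j' ≤ f j) →
      ∀ j j', j < p → j' < p → f j + (p - 1 - j) = f j' + (p - 1 - j') → j = j' := by
    intro f hf j j' hjp hj'p heq
    rcases lt_trichotomy j j' with h | h | h
    · have := hf j j' (le_of_lt h) hj'p; omega
    · exact h
    · have := hf j' j (le_of_lt h) hjp; omega
  set b := mu r₂ + (p - 1 - r₂) with hb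
  have hB : ∀ j, r₁ ≤ j → j < r₂ → lam (j + 1) + (p - 1 - (j + 1)) = mu j + (p - 1 - j) := by
    intro j hj1 hj2
    have := hstep j hj1 hj2
    omega
  have hC : lam r₁ + (p - 1 - r₁) = b + k := by omega
  have h1p : r₁ < p := by omega
  -- b ∉ BetaSet lam
  have hb_not_lam : b ∉ BetaSet p lam := by
    rintro ⟨j, hjp, hj⟩
    by_cases hjo : j < r₁ ∨ r₂ < j
    · have := hout j hjp hjo
      have : j = r₂ := binj mu hmu j r₂ hjp h2p (by omega)
      omega
    · push_neg at hjo
      rcases eq_or_lt_of_le hjo.1 with he | hlt'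
      · subst he; omega
      · obtain ⟨m, rfl⟩ : ∃ m, j = m + 1 := ⟨j - 1, by omega⟩
        have hBm := hB m (by omega) (by omega)
        have : m = r₂ := binj mu hmu m r₂ (by omega) h2p (by omega)
        omega
  -- b + k ∉ BetaSet mu
  have hbk_not_mu : b + k ∉ BetaSet p mu := by
    rintro ⟨j, hjp, hj⟩
    by_cases hjo : j < r₁ ∨ r₂ < j
    · have := hout j hjp hjo
      have : j = r₁ := binj lam hlam j r₁ hjp h1p (by omega)
      omega
    · push_neg at hjo
      rcases eq_or_lt_of_le hjo.2 with he | hlt'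
      · subst he; omega
      · have hBj := hB j hjo.1 hlt'
        have : j + 1 = r₁ := binj lam hlam (j + 1) r₁ (by omega) h1p (by omega)
        omega
  have hb_mu : b ∈ BetaSet p mu := ⟨r₂, h2p, rfl⟩
  have hbk_lam : b + k ∈ BetaSet p lam := ⟨r₁, h1p, hC.symm⟩
  -- off positions agree
  have hoff : ∀ x, x ≠ b → x ≠ b + k → (x ∈ BetaSet p lam ↔ x ∈ BetaSet p mu) := by
    intro x hx1 hx2
    constructor
    · rintro ⟨j, hjp, hj⟩
      by_cases hjo : j < r₁ ∨ r₂ < j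
      · exact ⟨j, hjp, by rw [hj, hout j hjp hjo]⟩
      · push_neg at hjo
        rcases eq_or_lt_of_le hjo.1 with he | hlt'
        · subst he; exact absurd (by omega : x = b + k) hx2
        · obtain ⟨m, rfl⟩ : ∃ m, j = m + 1 := ⟨j - 1, by omega⟩
          have hBm := hB m (by omega) (by omega)
          exact ⟨m, by omega, by omega⟩
    · rintro ⟨j, hjp, hj⟩
      by_cases hjo : j < r₁ ∨ r₂ < j
      · exact ⟨j, hjp, by rw [hj, hout j hjp hjo]⟩
      · push_neg at hjo
        rcases eq_or_lt_of_le hjo.2 with he | hlt'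
        · subst he; exact absurd (by omega : x = b) hx1
        · have hBj := hB j hjo.1 hlt'
          exact ⟨j + 1, by omega, by omega⟩
  have hdm : b / k * k + b % k = b := by rw [mul_comm]; exact Nat.div_add_mod b k
  refine ⟨b / k, b % k, hdm.symm, Nat.mod_lt _ hk, ?_, ?_, ?_, ?_, ?_, ?_⟩
  · intro c hck hcr l
    have hm1 : (l * k + c) % k = c := by
      rw [mul_comm, Nat.mul_add_mod]; exact Nat.mod_eq_of_lt hck
    apply hoff
    · intro h
      apply hcr
      rw [← hm1, h]
    · intro h
      apply hcr
      rw [← hm1, h, Nat.add_mod_right]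
  · rw [hdm]; exact hb_mu
  · rw [hdm]; exact hb_not_lam
  · have : (b / k + 1) * k + b % k = b + k := by rw [add_mul]; omega
    rw [this]; exact hbk_lam
  · have : (b / k + 1) * k + b % k = b + k := by rw [add_mul]; omega
    rw [this]; exact hbk_not_mu
  · intro l hl1 hl2
    apply hoff
    · intro h
      apply hl1
      have : l * k = b / k * k := by omega
      exact Nat.eq_of_mul_eq_mul_right hk this
    · intro h
      apply hl2
      have : l * k = (b / k + 1) * k := by rw [add_mul]; omega
      exact Nat.eq_of_mul_eq_mul_right hk this
end

section
/- Under the Littlewood k-quotient bijection between semistandard k-ribbon tableaux of shape λ/μ and tuples of semistandard Young tableaux of shape equal to the k-quotient of λ/μ, the number of ribbons labelled i in a ribbon tableau T equals the number of cells labelled i in the corresponding tuple of tableaux. -/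
/-!
STATEMENT 4: Under the Littlewood `k`-quotient bijection, the number of ribbons
labelled `i` in a semistandard `k`-ribbon tableau equals the number of cells
labelled `i` in the corresponding tuple of semistandard Young tableaux.

Formalization.  Partitions are encoded by their beta sets: a finite set
`B ⊆ ℕ` of size `p` encodes the partition whose Maya diagram has `S` steps
exactly at the positions in `B`; the size of that partition is
`Σ_{b ∈ B} b − C(|B|, 2)`.  Adding a single `k`-ribbon to a partition moves one
beta number `i ∈ B` (with `i + k ∉ B`) up to `i + k`.  The `k`-quotient
component `c` of `B` has beta set `{b / k : b ∈ B, b ≡ c (mod k)}`.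

In a semistandard `k`-ribbon tableau, the subtableau of ribbons labelled `i` is
a (horizontal) `k`-ribbon strip `λ_{≤i}/λ_{≤i−1}`, i.e. a chain of partitions
`λ_{≤i−1} = ν₀, ν₁, …, ν_M = λ_{≤i}` in which each step adds a single
`k`-ribbon, `M` being the number of ribbons labelled `i`; and under the
Littlewood `k`-quotient map the number of cells labelled `i` in the
corresponding tuple of tableaux is the total size of the `k`-quotient of
`λ_{≤i}` minus that of `λ_{≤i−1}`.  The theorem states these two quantities
are equal: along any chain of `M` single-ribbon additions, the total size of
the `k`-quotient grows by exactly `M`.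
-/

open Finset

/-- The size of the partition encoded by the beta set `B`:
`Σ_{b ∈ B} b − C(|B|, 2)`. -/
def betaSize (B : Finset ℕ) : ℤ :=
  (∑ b ∈ B, (b : ℤ)) - (Nat.choose B.card 2 : ℤ)

/-- The beta set of the `c`-th component of the `k`-quotient of the partition
with beta set `B`. -/
def quotBeta (k c : ℕ) (B : Finset ℕ) : Finset ℕ :=
  (B.filter (fun b => b % k = c)).image (fun b => b / k)

/-- The total number of cells in the `k`-quotient of the partition with beta
set `B`. -/
def totalQuotSize (k : ℕ) (B : Finset ℕ) : ℤ :=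
  ∑ c ∈ Finset.range k, betaSize (quotBeta k c B)

/-- Adding a single `k`-ribbon: one beta number moves up by `k`. -/
def IsRibbonStep (k : ℕ) (B B' : Finset ℕ) : Prop :=
  ∃ i, i ∈ B ∧ i + k ∉ B ∧ B' = insert (i + k) (B.erase i)

lemma quotBeta_injOn (k c : ℕ) (B : Finset ℕ) :
    Set.InjOn (fun b => b / k) (B.filter (fun b => b % k = c) : Set ℕ) := by
  intro a ha b hb hab
  simp only [coe_filter, Set.mem_setOf_eq] at ha hb
  have hab' : a / k = b / k := hab
  have hm : a % k = b % k := ha.2.trans hb.2.symm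
  rw [← Nat.div_add_mod a k, ← Nat.div_add_mod b k, hab', hm]

lemma betaSize_quotBeta (k c : ℕ) (B : Finset ℕ) :
    betaSize (quotBeta k c B) =
      (∑ b ∈ B.filter (fun b => b % k = c), ((b / k : ℕ) : ℤ)) -
        (Nat.choose (B.filter (fun b => b % k = c)).card 2 : ℤ) := by
  unfold betaSize quotBeta
  rw [Finset.sum_image (fun a ha b hb hab => quotBeta_injOn k c B (by simpa using ha)
      (by simpa using hb) hab),
    Finset.card_image_of_injOn (quotBeta_injOn k c B)]

lemma totalQuotSize_eq (k : ℕ) (hk : 0 < k) (B : Finset ℕ) :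
    totalQuotSize k B = (∑ b ∈ B, ((b / k : ℕ) : ℤ)) -
      ∑ c ∈ Finset.range k, (Nat.choose (B.filter (fun b => b % k = c)).card 2 : ℤ) := by
  unfold totalQuotSize
  rw [Finset.sum_congr rfl (fun c _ => betaSize_quotBeta k c B), Finset.sum_sub_distrib]
  congr 1
  exact Finset.sum_fiberwise_of_maps_to
      (fun b _ => Finset.mem_range.mpr (Nat.mod_lt b hk))
      (fun b : ℕ => ((b / k : ℕ) : ℤ))

lemma step_totalQuotSize (k : ℕ) (hk : 0 < k) {B B' : Finset ℕ}
    (h : IsRibbonStep k B B') : totalQuotSize k B' = totalQuotSize k B + 1 := by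
  obtain ⟨i, hiB, hik, rfl⟩ := h
  rw [totalQuotSize_eq k hk, totalQuotSize_eq k hk]
  have hik' : i + k ∉ B.erase i := fun h => hik (Finset.mem_of_mem_erase h)
  have hsum : (∑ b ∈ insert (i + k) (B.erase i), ((b / k : ℕ) : ℤ))
      = (∑ b ∈ B, ((b / k : ℕ) : ℤ)) + 1 := by
    rw [Finset.sum_insert hik', Finset.sum_erase_eq_sub hiB,
      Nat.add_div_right i hk]
    push_cast
    ring
  have hcard : ∀ c, ((insert (i + k) (B.erase i)).filter (fun b => b % k = c)).card
      = (B.filter (fun b => b % k = c)).card := by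
    intro c
    rw [Finset.filter_insert, Finset.filter_erase]
    have hmod : (i + k) % k = i % k := Nat.add_mod_right i k
    by_cases hc : i % k = c
    · rw [if_pos (by rw [hmod]; exact hc)]
      have h1 : i ∈ B.filter (fun b => b % k = c) := Finset.mem_filter.mpr ⟨hiB, hc⟩
      have h2 : i + k ∉ (B.filter (fun b => b % k = c)).erase i :=
        fun h => hik (Finset.mem_filter.mp (Finset.mem_of_mem_erase h)).1
      rw [Finset.card_insert_of_notMem h2, Finset.card_erase_of_mem h1]
      have : 0 < (B.filter (fun b => b % k = c)).card := Finset.card_pos.mpr ⟨i, h1⟩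
      omega
    · rw [if_neg (by rw [hmod]; exact hc)]
      have hi' : i ∉ B.filter (fun b => b % k = c) :=
        fun h => hc (Finset.mem_filter.mp h).2
      rw [Finset.erase_eq_of_notMem hi']
  rw [hsum]
  have : ∀ c ∈ Finset.range k,
      ((Nat.choose ((insert (i + k) (B.erase i)).filter (fun b => b % k = c)).card 2 : ℤ))
      = (Nat.choose (B.filter (fun b => b % k = c)).card 2 : ℤ) := by
    intro c _; rw [hcard]
  rw [Finset.sum_congr rfl this]
  ring

/-- Along a chain of `M` single-`k`-ribbon additions (the ribbons labelled `i`
of a semistandard `k`-ribbon tableau), the total size of the `k`-quotient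
increases by exactly `M`: the number of ribbons labelled `i` equals the number
of cells labelled `i` in the Littlewood `k`-quotient image. -/
theorem ribbon_count_eq_quotient_cell_count (k : ℕ) (hk : 0 < k) (M : ℕ)
    (ν : ℕ → Finset ℕ) (hstep : ∀ j, j < M → IsRibbonStep k (ν j) (ν (j + 1))) :
    totalQuotSize k (ν M) = totalQuotSize k (ν 0) + M := by
  induction M with
  | zero => simp
  | succ n ih =>
    rw [step_totalQuotSize k hk (hstep n (Nat.lt_succ_self n)),
      ih (fun j hj => hstep j (Nat.lt_succ_of_lt hj))]
    push_cast
    ring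
end

section
/- The one-color R, L matrices satisfy the RLL Yang–Baxter equation: for all boundary values I_1, J_1, K_1, I_3, J_3, K_3 ∈ {0,1}, the sum over interior values I_2, J_2, K_2 ∈ {0,1} of R_{y/x}(I_1,J_1;I_2,J_2)·L_x(K_1,J_2;K_2,J_3)·L_y(K_2,I_2;K_3,I_3) equals the sum over interior values of L_y(K_1,I_1;K_2,I_2)·L_x(K_2,J_1;K_3,J_2)·R_{y/x}(I_2,J_2;I_3,J_3), as an identity of rational functions in x, y. -/
/-!
STATEMENT 7: The one-color R and L matrices satisfy the RLL Yang–Baxter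
equation, as an identity of rational functions in `x`, `y` (formalized over an
arbitrary field with `x ≠ 0`, so that `y/x` makes sense).
-/

variable {F : Type*} [Field F]

/-- One-color L-matrix weight `L_x(i,j,k,l)`: zero unless `i + j = k + l` and
`(i,j) ≠ (1,1)`; the five nonzero weights are as in the table. -/
def oneLw (x : F) : Bool → Bool → Bool → Bool → F
  | false, false, false, false => 1
  | true, false, false, true => x
  | false, true, false, true => x
  | true, false, true, false => 1
  | false, true, true, false => 1
  | _, _, _, _ => 0

/-- One-color R-matrix weight `R_z(i,j,k,l)` with `z = y/x`: zero unless
`i + j = k + l` and `j ≥ k`; the five nonzero weights are as in the table. -/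
def oneRw (z : F) : Bool → Bool → Bool → Bool → F
  | false, true, false, true => 1 - z
  | false, true, true, false => z
  | true, false, false, true => 1
  | true, true, true, true => z
  | false, false, false, false => 1
  | _, _, _, _ => 0

/-- The RLL Yang–Baxter equation for the one-color `R` and `L` matrices:
for all boundary values, summing over the interior values `I₂, J₂, K₂`,
`∑ R_{y/x}(I₁,J₁;I₂,J₂) L_x(K₁,J₂;K₂,J₃) L_y(K₂,I₂;K₃,I₃)
  = ∑ L_y(K₁,I₁;K₂,I₂) L_x(K₂,J₁;K₃,J₂) R_{y/x}(I₂,J₂;I₃,J₃)`. -/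
theorem one_color_RLL_YBE (x y : F) (hx : x ≠ 0)
    (I₁ J₁ K₁ I₃ J₃ K₃ : Bool) :
    (∑ v : Bool × Bool × Bool,
        oneRw (y / x) I₁ J₁ v.1 v.2.1 * oneLw x K₁ v.2.1 v.2.2 J₃ *
          oneLw y v.2.2 v.1 K₃ I₃)
      = ∑ v : Bool × Bool × Bool,
          oneLw y K₁ I₁ v.2.2 v.1 * oneLw x v.2.2 J₁ K₃ v.2.1 *
            oneRw (y / x) v.1 v.2.1 I₃ J₃ := by
  simp only [Fintype.sum_prod_type, Fintype.sum_bool]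
  cases I₁ <;> cases J₁ <;> cases K₁ <;> cases I₃ <;> cases J₃ <;> cases K₃ <;>
    simp only [oneLw, oneRw] <;> field_simp <;> ring
end

section
/- Horizontal strips and single white rows: for tuples of partitions μ ⊆ λ (componentwise, with the same number of parts), the tuple λ/μ is a horizontal strip in each component (i.e., λ^{(i)}/μ^{(i)} contains at most one cell in each column, equivalently λ^{(i)}_j ≥ μ^{(i)}_j ≥ λ^{(i)}_{j+1} for all i, j) if and only if there exists a (then unique) configuration of the k-color L-matrix single-row vertex model with bottom boundary μ, top boundary λ, and no paths entering or exiting at the left and right ends of the row. -/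
open Finset

/-- Indicator of a boolean as a natural number. -/
def bn (b : Bool) : ℕ := if b then 1 else 0

/-- `phi L M = ∑_{i<j} L_i · M_j` (the exponent statistic `φ`). -/
def phi {k : ℕ} (L : Fin k → Bool) (M : Fin k → ℕ) : ℕ :=
  ∑ i : Fin k, ∑ j : Fin k, if i < j ∧ L i = true then M j else 0

/-- The `k`-color L-matrix (white vertex) weight
`L_x(I,J,K,L) = 1_{I+J=K+L} ∏ᵢ 1_{Iᵢ+Jᵢ≠2} · x^{|L|} t^{φ(L,I+J)}`. -/
def Lw {F : Type*} [CommRing F] {k : ℕ} (x t : F) (I J K L : Fin k → Bool) : F :=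
  if (∀ i, bn (I i) + bn (J i) = bn (K i) + bn (L i)) ∧
      (∀ i, ¬(I i = true ∧ J i = true)) then
    x ^ (∑ i, bn (L i)) * t ^ phi L (fun i => bn (I i) + bn (J i))
  else 0

/-- The `k`-color L'-matrix (purple vertex) weight
`L'_x(I,J,K,L) = 1_{I+J=K+L} ∏ᵢ 1_{Kᵢ≥Jᵢ} · x^{|L|} t^{φ(L,K−J)}`. -/
def L'w {F : Type*} [CommRing F] {k : ℕ} (x t : F) (I J K L : Fin k → Bool) : F :=
  if (∀ i, bn (I i) + bn (J i) = bn (K i) + bn (L i)) ∧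
      (∀ i, bn (J i) ≤ bn (K i)) then
    x ^ (∑ i, bn (L i)) * t ^ phi L (fun i => bn (K i) - bn (J i))
  else 0

/-- Partition function of a single row of `N` vertices with vertex weights `V`,
bottom vertical edges `E`, top vertical edges `E'`, summed over all horizontal
edge configurations with empty left and right boundaries.  (Invalid
configurations contribute `0` via the indicator in the vertex weights.) -/
def rowW {F : Type*} [CommRing F] {k N : ℕ}
    (V : (Fin k → Bool) → (Fin k → Bool) → (Fin k → Bool) → (Fin k → Bool) → F)
    (E E' : Fin N → Fin k → Bool) : F :=
  ∑ H : Fin (N + 1) → Fin k → Bool,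
    if H 0 = (fun _ => false) ∧ H (Fin.last N) = (fun _ => false) then
      ∏ c : Fin N, V (E c) (H c.castSucc) (E' c) (H c.succ)
    else 0

/-- The boundary state in a row of `N` columns encoding a `k`-tuple of
partitions with `p` parts: column `c` is occupied by color `i` iff `c` is a
beta number `lam i j + (p − 1 − j)` of the `i`-th partition. -/
def bstate {k : ℕ} (N p : ℕ) (lam : Fin k → ℕ → ℕ) : Fin N → Fin k → Bool :=
  fun c i => decide (∃ j ∈ Finset.range p, (c : ℕ) = lam i j + (p - 1 - j))

/-- The supersymmetric LLT partition function `L^S_{λ/μ}(X_n; Y_m; t)`: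
`n` white rows (L-matrix weights, parameters `x₁,…,xₙ`) below `m` purple rows
(L'-matrix weights, parameters `y₁,…,y_m`), bottom boundary `μ`, top boundary
`λ`, empty side boundaries. -/
def LS {F : Type*} [CommRing F] {k : ℕ} (N p n m : ℕ) (lam mu : Fin k → ℕ → ℕ)
    (x : Fin n → F) (y : Fin m → F) (t : F) : F :=
  ∑ s : Fin (n + m + 1) → Fin N → Fin k → Bool,
    if s 0 = bstate N p mu ∧ s (Fin.last (n + m)) = bstate N p lam then
      (∏ r : Fin n,
        rowW (Lw (x r) t) (s ⟨r.1, by have := r.2; omega⟩)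
          (s ⟨r.1 + 1, by have := r.2; omega⟩)) *
      (∏ r : Fin m,
        rowW (L'w (y r) t) (s ⟨n + r.1, by have := r.2; omega⟩)
          (s ⟨n + r.1 + 1, by have := r.2; omega⟩))
    else 0

/-- `lam` is a `k`-tuple of partitions with `p` parts, fitting in a lattice of
width `N` (all beta numbers are `< N`). -/
def IsPartTuple {k : ℕ} (N p : ℕ) (lam : Fin k → ℕ → ℕ) : Prop :=
  (∀ i, ∀ j j', j ≤ j' → j' < p → lam i j' ≤ lam i j) ∧
  (∀ i j, j < p → lam i j + (p - 1 - j) < N)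

/-- A valid configuration of a single white (L-matrix) row with bottom vertical
edges `E`, top vertical edges `E'` and horizontal edges `H`, with no paths
entering or exiting at the left or right ends: path conservation holds at every
vertex for every color, no color both enters from the bottom and from the left
of the same vertex, and the side boundaries are empty. -/
def ValidWhiteRow {k N : ℕ} (E E' : Fin N → Fin k → Bool)
    (H : Fin (N + 1) → Fin k → Bool) : Prop :=
  H 0 = (fun _ => false) ∧ H (Fin.last N) = (fun _ => false) ∧
  ∀ (c : Fin N) (i : Fin k),
    bn (E c i) + bn (H c.castSucc i) = bn (E' c i) + bn (H c.succ i) ∧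
    ¬(E c i = true ∧ H c.castSucc i = true)

namespace HSaux

lemma bn_le_one (b : Bool) : bn b ≤ 1 := by cases b <;> simp [bn]

lemma bn_inj {a b : Bool} (h : bn a = bn b) : a = b := by
  cases a <;> cases b <;> simp_all [bn]

/-- Number of beta numbers strictly below `c`. -/
def cnt (p : ℕ) (b : ℕ → ℕ) (c : ℕ) : ℕ :=
  ((Finset.range p).filter fun j => b j < c).card

lemma cnt_zero (p : ℕ) (b : ℕ → ℕ) : cnt p b 0 = 0 := by simp [cnt]

lemma cnt_full (p N : ℕ) (b : ℕ → ℕ) (h : ∀ j, j < p → b j < N) :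
    cnt p b N = p := by
  unfold cnt
  rw [Finset.filter_true_of_mem, Finset.card_range]
  intro j hj
  exact h j (Finset.mem_range.mp hj)

lemma cnt_succ (p : ℕ) (b : ℕ → ℕ)
    (hb : ∀ j j', j < j' → j' < p → b j' < b j) (c : ℕ) :
    cnt p b (c + 1) = cnt p b c + bn (decide (∃ j ∈ Finset.range p, c = b j)) := by
  classical
  have hinj : ∀ j j', j < p → j' < p → b j = b j' → j = j' := by
    intro j j' hj hj' he
    rcases lt_trichotomy j j' with h | h | h
    · have := hb j j' h hj'; omega
    · exact h
    · have := hb j' j h hj; omega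
  have hsplit : (Finset.range p).filter (fun j => b j < c + 1)
      = (Finset.range p).filter (fun j => b j < c)
        ∪ (Finset.range p).filter (fun j => b j = c) := by
    ext j
    simp only [Finset.mem_union, Finset.mem_filter, Finset.mem_range]
    omega
  have hdisj : Disjoint ((Finset.range p).filter (fun j => b j < c))
      ((Finset.range p).filter (fun j => b j = c)) := by
    rw [Finset.disjoint_left]
    intro a ha ha'
    rw [Finset.mem_filter] at ha ha'
    omega
  rw [cnt, hsplit, Finset.card_union_of_disjoint hdisj]
  congr 1
  by_cases hex : ∃ j ∈ Finset.range p, c = b j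
  · obtain ⟨j0, hj0, hc⟩ := hex
    rw [Finset.mem_range] at hj0
    have : (Finset.range p).filter (fun j => b j = c) = {j0} := by
      ext j
      simp only [Finset.mem_filter, Finset.mem_range, Finset.mem_singleton]
      constructor
      · rintro ⟨hj, he⟩
        exact hinj j j0 hj hj0 (by omega)
      · rintro rfl
        exact ⟨hj0, hc.symm⟩
    rw [this, Finset.card_singleton,
      decide_eq_true (⟨j0, Finset.mem_range.mpr hj0, hc⟩ :
        ∃ j ∈ Finset.range p, c = b j)]
    rfl
  · have h0 : (Finset.range p).filter (fun j => b j = c) = ∅ := by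
      apply Finset.filter_eq_empty_iff.mpr
      intro j hj hbe
      exact hex ⟨j, hj, hbe.symm⟩
    have h1 : decide (∃ j ∈ Finset.range p, c = b j) = false :=
      decide_eq_false hex
    rw [h0, h1]
    rfl

lemma anti_of_strict {p : ℕ} {b : ℕ → ℕ}
    (hb : ∀ j j', j < j' → j' < p → b j' < b j)
    {j j' : ℕ} (h : j ≤ j') (h' : j' < p) : b j' ≤ b j := by
  rcases eq_or_lt_of_le h with rfl | h
  · exact le_refl _
  · exact le_of_lt (hb _ _ h h')

lemma cnt_le {p : ℕ} {bm bl : ℕ → ℕ} (h : ∀ j, j < p → bm j ≤ bl j) (c : ℕ) :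
    cnt p bl c ≤ cnt p bm c := by
  apply Finset.card_le_card
  intro j hj
  rw [Finset.mem_filter, Finset.mem_range] at hj ⊢
  exact ⟨hj.1, lt_of_le_of_lt (h j hj.1) hj.2⟩

lemma cnt_diff_le_one {p : ℕ} {bm bl : ℕ → ℕ}
    (hbl : ∀ j j', j < j' → j' < p → bl j' < bl j)
    (h2 : ∀ j, j + 1 < p → bl (j + 1) < bm j) (c : ℕ) :
    cnt p bm c ≤ cnt p bl c + 1 := by
  classical
  by_cases hne : ((Finset.range p).filter fun j => bm j < c).Nonempty
  · set m := ((Finset.range p).filter fun j => bm j < c).min' hne with hm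
    have hmmem := Finset.min'_mem _ hne
    rw [← hm, Finset.mem_filter, Finset.mem_range] at hmmem
    have hsub : ((Finset.range p).filter fun j => bm j < c)
        ⊆ insert m ((Finset.range p).filter fun j => bl j < c) := by
      intro j hj
      rcases eq_or_ne j m with rfl | hne'
      · exact Finset.mem_insert_self _ _
      · have hjm : m < j := lt_of_le_of_ne (Finset.min'_le _ j hj) (Ne.symm hne')
        rw [Finset.mem_filter, Finset.mem_range] at hj
        apply Finset.mem_insert_of_mem
        rw [Finset.mem_filter, Finset.mem_range]
        refine ⟨hj.1, ?_⟩
        have h3 : bl j ≤ bl (m + 1) := anti_of_strict hbl (by omega) hj.1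
        have h4 : bl (m + 1) < bm m := h2 m (by omega)
        omega
    calc cnt p bm c ≤ (insert m ((Finset.range p).filter fun j => bl j < c)).card :=
          Finset.card_le_card hsub
      _ ≤ cnt p bl c + 1 := Finset.card_insert_le _ _
  · rw [Finset.not_nonempty_iff_eq_empty] at hne
    unfold cnt
    rw [hne]
    simp

lemma cnt_le_at_beta {p : ℕ} {bm bl : ℕ → ℕ}
    (hbm : ∀ j j', j < j' → j' < p → bm j' < bm j)
    (hbl : ∀ j j', j < j' → j' < p → bl j' < bl j)
    (h2 : ∀ j, j + 1 < p → bl (j + 1) < bm j)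
    {j0 : ℕ} (hj0 : j0 < p) :
    cnt p bm (bm j0) ≤ cnt p bl (bm j0) := by
  apply Finset.card_le_card
  intro j hj
  rw [Finset.mem_filter, Finset.mem_range] at hj ⊢
  refine ⟨hj.1, ?_⟩
  have hgt : j0 < j := by
    by_contra h
    push_neg at h
    have := anti_of_strict hbm h hj0
    omega
  have h3 : bl j ≤ bl (j0 + 1) := anti_of_strict hbl (by omega) hj.1
  have h4 : bl (j0 + 1) < bm j0 := h2 j0 (by omega)
  omega

lemma valid_unique {k N : ℕ} {E E' : Fin N → Fin k → Bool}
    {H1 H2 : Fin (N + 1) → Fin k → Bool}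
    (h1 : ValidWhiteRow E E' H1) (h2 : ValidWhiteRow E E' H2) : H1 = H2 := by
  funext c
  induction c using Fin.induction with
  | zero => rw [h1.1, h2.1]
  | succ c ih =>
    funext i
    have e1 := (h1.2.2 c i).1
    have e2 := (h2.2.2 c i).1
    rw [ih] at e1
    apply bn_inj
    omega

end HSaux

/-!
STATEMENT 19: Horizontal strips and single white rows.  For tuples of
partitions `μ ⊆ λ` with `p` parts, `λ/μ` is a horizontal strip in each
component (the interlacing `λ^{(i)}_j ≥ μ^{(i)}_j ≥ λ^{(i)}_{j+1}`) if and only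
if there exists a unique configuration of the `k`-color L-matrix single-row
vertex model with bottom boundary `μ`, top boundary `λ` and empty left/right
boundaries.
-/
theorem horizontal_strip_iff_unique_row {k : ℕ}
    (N p : ℕ) (lam mu : Fin k → ℕ → ℕ)
    (hlam : IsPartTuple N p lam) (hmu : IsPartTuple N p mu) :
    ((∀ i j, j < p → mu i j ≤ lam i j) ∧
        (∀ i j, j + 1 < p → lam i (j + 1) ≤ mu i j))
      ↔ ∃! H : Fin (N + 1) → Fin k → Bool,
          ValidWhiteRow (bstate N p mu) (bstate N p lam) H := by
  classical
  open HSaux in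
  -- strict decrease of beta numbers
  have hms : ∀ i : Fin k, ∀ j j', j < j' → j' < p →
      mu i j' + (p - 1 - j') < mu i j + (p - 1 - j) := by
    intro i j j' h1 h2
    have := hmu.1 i j j' (le_of_lt h1) h2
    omega
  have hls : ∀ i : Fin k, ∀ j j', j < j' → j' < p →
      lam i j' + (p - 1 - j') < lam i j + (p - 1 - j) := by
    intro i j j' h1 h2
    have := hlam.1 i j j' (le_of_lt h1) h2
    omega
  constructor
  · rintro ⟨hsub, hint⟩
    -- interlacing in beta form
    have hβ1 : ∀ i : Fin k, ∀ j, j < p →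
        mu i j + (p - 1 - j) ≤ lam i j + (p - 1 - j) := by
      intro i j hj
      have := hsub i j hj
      omega
    have hβ2 : ∀ i : Fin k, ∀ j, j + 1 < p →
        lam i (j + 1) + (p - 1 - (j + 1)) < mu i j + (p - 1 - j) := by
      intro i j hj
      have := hint i j hj
      omega
    have hvalid : ValidWhiteRow (bstate N p mu) (bstate N p lam)
        (fun c i => decide (cnt p (fun j => mu i j + (p - 1 - j)) (c : ℕ)
          = cnt p (fun j => lam i j + (p - 1 - j)) (c : ℕ) + 1)) := by
      refine ⟨?_, ?_, ?_⟩
      · funext i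
        simp [cnt_zero]
      · funext i
        have h1 : cnt p (fun j => mu i j + (p - 1 - j)) N = p :=
          cnt_full p N _ (fun j hj => hmu.2 i j hj)
        have h2 : cnt p (fun j => lam i j + (p - 1 - j)) N = p :=
          cnt_full p N _ (fun j hj => hlam.2 i j hj)
        show decide _ = false
        apply decide_eq_false
        intro h
        rw [Fin.val_last, h1, h2] at h
        omega
      · intro c i
        have e1 := cnt_succ p (fun j => mu i j + (p - 1 - j)) (hms i) (c : ℕ)
        have e2 := cnt_succ p (fun j => lam i j + (p - 1 - j)) (hls i) (c : ℕ)
        have hEm : bstate N p mu c i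
            = decide (∃ j ∈ Finset.range p, (c : ℕ) = mu i j + (p - 1 - j)) := rfl
        have hEl : bstate N p lam c i
            = decide (∃ j ∈ Finset.range p, (c : ℕ) = lam i j + (p - 1 - j)) := rfl
        have hb1 := cnt_le (hβ1 i) (c : ℕ)
        have hb1' := cnt_le (hβ1 i) ((c : ℕ) + 1)
        have hb2 := cnt_diff_le_one (hls i) (hβ2 i) (c : ℕ)
        have hb2' := cnt_diff_le_one (hls i) (hβ2 i) ((c : ℕ) + 1)
        -- if the bottom edge is occupied, counts agree
        have hbeta : bstate N p mu c i = true →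
            cnt p (fun j => mu i j + (p - 1 - j)) (c : ℕ)
              = cnt p (fun j => lam i j + (p - 1 - j)) (c : ℕ) := by
          intro hE
          rw [hEm] at hE
          obtain ⟨j0, hj0, hc⟩ := of_decide_eq_true hE
          rw [Finset.mem_range] at hj0
          have := cnt_le_at_beta (hms i) (hls i) (hβ2 i) hj0
          rw [← hc] at this
          omega
        rw [← hEm] at e1
        rw [← hEl] at e2
        have hm1 := bn_le_one (bstate N p mu c i)
        have hl1 := bn_le_one (bstate N p lam c i)
        have k1 : bn (decide (cnt p (fun j => mu i j + (p - 1 - j)) (c : ℕ)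
              = cnt p (fun j => lam i j + (p - 1 - j)) (c : ℕ) + 1))
            = cnt p (fun j => mu i j + (p - 1 - j)) (c : ℕ)
              - cnt p (fun j => lam i j + (p - 1 - j)) (c : ℕ) := by
          by_cases hd : cnt p (fun j => mu i j + (p - 1 - j)) (c : ℕ)
              = cnt p (fun j => lam i j + (p - 1 - j)) (c : ℕ) + 1
          · rw [decide_eq_true hd]
            show 1 = _
            omega
          · rw [decide_eq_false hd]
            show 0 = _
            omega
        have k2 : bn (decide (cnt p (fun j => mu i j + (p - 1 - j)) ((c : ℕ) + 1)
              = cnt p (fun j => lam i j + (p - 1 - j)) ((c : ℕ) + 1) + 1))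
            = cnt p (fun j => mu i j + (p - 1 - j)) ((c : ℕ) + 1)
              - cnt p (fun j => lam i j + (p - 1 - j)) ((c : ℕ) + 1) := by
          by_cases hd : cnt p (fun j => mu i j + (p - 1 - j)) ((c : ℕ) + 1)
              = cnt p (fun j => lam i j + (p - 1 - j)) ((c : ℕ) + 1) + 1
          · rw [decide_eq_true hd]
            show 1 = _
            omega
          · rw [decide_eq_false hd]
            show 0 = _
            omega
        constructor
        · simp only [Fin.coe_castSucc, Fin.val_succ]
          rw [k1, k2]
          omega
        · rintro ⟨hE, hH⟩
          have heq := hbeta hE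
          simp only [Fin.coe_castSucc] at hH
          have := of_decide_eq_true hH
          omega
    exact ⟨_, hvalid, fun y hy => valid_unique hy hvalid⟩
  · rintro ⟨H, hH, -⟩
    -- the horizontal edges record the difference of counting functions
    have key : ∀ i : Fin k, ∀ c : Fin (N + 1),
        bn (H c i) + cnt p (fun j => lam i j + (p - 1 - j)) (c : ℕ)
          = cnt p (fun j => mu i j + (p - 1 - j)) (c : ℕ) := by
      intro i c
      induction c using Fin.induction with
      | zero =>
        rw [hH.1]
        simp [bn, cnt_zero]
      | succ c ih =>
        have e := (hH.2.2 c i).1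
        have e1 := cnt_succ p (fun j => mu i j + (p - 1 - j)) (hms i) (c : ℕ)
        have e2 := cnt_succ p (fun j => lam i j + (p - 1 - j)) (hls i) (c : ℕ)
        have hEm : bstate N p mu c i
            = decide (∃ j ∈ Finset.range p, (c : ℕ) = mu i j + (p - 1 - j)) := rfl
        have hEl : bstate N p lam c i
            = decide (∃ j ∈ Finset.range p, (c : ℕ) = lam i j + (p - 1 - j)) := rfl
        rw [hEm, hEl] at e
        simp only [Fin.coe_castSucc, Fin.val_succ] at e ih ⊢
        omega
    have bounds : ∀ i : Fin k, ∀ c, c ≤ N →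
        cnt p (fun j => lam i j + (p - 1 - j)) c
            ≤ cnt p (fun j => mu i j + (p - 1 - j)) c ∧
          cnt p (fun j => mu i j + (p - 1 - j)) c
            ≤ cnt p (fun j => lam i j + (p - 1 - j)) c + 1 := by
      intro i c hc
      have hk := key i ⟨c, by omega⟩
      have hb := bn_le_one (H ⟨c, by omega⟩ i)
      simp only [Fin.val_mk] at hk
      omega
    -- at a mu-beta position the counts agree
    have hnb : ∀ i : Fin k, ∀ j0, j0 < p →
        cnt p (fun j => mu i j + (p - 1 - j)) (mu i j0 + (p - 1 - j0))
          = cnt p (fun j => lam i j + (p - 1 - j)) (mu i j0 + (p - 1 - j0)) := by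
      intro i j0 hj0
      have hcN : mu i j0 + (p - 1 - j0) < N := hmu.2 i j0 hj0
      set c : Fin N := ⟨mu i j0 + (p - 1 - j0), hcN⟩ with hcdef
      have hE : bstate N p mu c i = true := by
        apply decide_eq_true
        exact ⟨j0, Finset.mem_range.mpr hj0, rfl⟩
      have hnb' := (hH.2.2 c i).2
      have hHf : H c.castSucc i = false := by
        by_contra h
        exact hnb' ⟨hE, by simpa using h⟩
      have hk := key i c.castSucc
      rw [hHf] at hk
      simp only [Fin.coe_castSucc, hcdef, Fin.val_mk, bn, if_neg Bool.false_ne_true] at hk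
      omega
    constructor
    · intro i j hj
      by_contra hlt
      push_neg at hlt
      set c : ℕ := lam i j + (p - 1 - j) + 1 with hcdef
      have hcN : c ≤ N := by
        have := hlam.2 i j hj
        omega
      have hIco : Finset.Ico j p
          ⊆ (Finset.range p).filter fun j' => lam i j' + (p - 1 - j') < c := by
        intro j' hj'
        rw [Finset.mem_Ico] at hj'
        rw [Finset.mem_filter, Finset.mem_range]
        refine ⟨hj'.2, ?_⟩
        have := anti_of_strict (hls i) hj'.1 hj'.2
        omega
      have h1 : p - j ≤ cnt p (fun j' => lam i j' + (p - 1 - j')) c := by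
        have := Finset.card_le_card hIco
        rwa [Nat.card_Ico] at this
      have hsubμ : ((Finset.range p).filter fun j' => mu i j' + (p - 1 - j') < c)
          ⊆ Finset.Ico (j + 1) p := by
        intro j' hj'
        rw [Finset.mem_filter, Finset.mem_range] at hj'
        rw [Finset.mem_Ico]
        refine ⟨?_, hj'.1⟩
        by_contra h
        push_neg at h
        have := anti_of_strict (hms i) (by omega : j' ≤ j) hj
        omega
      have h2 : cnt p (fun j' => mu i j' + (p - 1 - j')) c ≤ p - (j + 1) := by
        have := Finset.card_le_card hsubμ
        rwa [Nat.card_Ico] at this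
      have := (bounds i c hcN).1
      omega
    · intro i j hj
      by_contra hlt
      push_neg at hlt
      -- so mu i j < lam i (j+1), hence bm j ≤ bl (j+1)
      set c : ℕ := mu i j + (p - 1 - j) with hcdef
      have hble : c ≤ lam i (j + 1) + (p - 1 - (j + 1)) := by omega
      have heq := hnb i j (by omega)
      rw [← hcdef] at heq
      have hIco : Finset.Ico (j + 1) p
          ⊆ (Finset.range p).filter fun j' => mu i j' + (p - 1 - j') < c := by
        intro j' hj'
        rw [Finset.mem_Ico] at hj'
        rw [Finset.mem_filter, Finset.mem_range]
        exact ⟨hj'.2, hms i j j' (by omega) hj'.2⟩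
      have h1 : p - (j + 1) ≤ cnt p (fun j' => mu i j' + (p - 1 - j')) c := by
        have := Finset.card_le_card hIco
        rwa [Nat.card_Ico] at this
      have hsubL : ((Finset.range p).filter fun j' => lam i j' + (p - 1 - j') < c)
          ⊆ Finset.Ico (j + 2) p := by
        intro j' hj'
        rw [Finset.mem_filter, Finset.mem_range] at hj'
        rw [Finset.mem_Ico]
        refine ⟨?_, hj'.1⟩
        by_contra h
        push_neg at h
        have := anti_of_strict (hls i) (by omega : j' ≤ j + 1) hj
        omega
      have h2 : cnt p (fun j' => lam i j' + (p - 1 - j')) c ≤ p - (j + 2) := by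
        have := Finset.card_le_card hsubL
        rwa [Nat.card_Ico] at this
      omega
end
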